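/- Let R be a discrete valuation ring with uniformizer x, A = R[z]/(z^n), and M, N finitely generated A-modules, with M having no nonzero element annihilated by a power of x. Then z^{n-1} · Ext^1_A(M, N) = 0. -/

import Mathlib

/-!
In `A = R[z]/(z^n)` one has `z^{n-1} b = b(0) z^{n-1}`, so `A` acts on `z^{n-1} M` through `R`.
Since `M` is finite and `x`-torsion-free over the DVR `R`, the `R`-module `z^{n-1} M` is free;
lifting it along a surjection `π : F → M` into `z^{n-1} F` gives an `A`-linear `σ : M → F` with
`π ∘ σ = z^{n-1}`. Applied to the augmentation `P₀ → M` of a projective resolution, `σ` turns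
`z^{n-1}` times any `1`-cocycle of `Hom(P_•, N)` into a coboundary.
-/

open Polynomial

/-- The local model `A = R[z]/(z^n)` of a primitive multiple curve of multiplicity `n`. -/
abbrev Az (R : Type) [CommRing R] (n : ℕ) : Type :=
  R[X] ⧸ Ideal.span ({X ^ n} : Set R[X])

/-- The class of `z` (i.e. of `X`) in `A = R[z]/(z^n)`. -/
noncomputable def zc (R : Type) [CommRing R] (n : ℕ) : Az R n :=
  Ideal.Quotient.mk _ X

/-- The submodule `z^i M` of `M` (first canonical filtration). -/
noncomputable def zpowSub (R : Type) [CommRing R] (n : ℕ) (M : Type) [AddCommGroup M]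
    [Module (Az R n) M] (i : ℕ) : Submodule (Az R n) M :=
  LinearMap.range ((zc R n ^ i) • (LinearMap.id : M →ₗ[Az R n] M))

/-- The submodule `M^{(i)} = {u ∈ M : z^i • u = 0}` (second canonical filtration). -/
noncomputable def ztor (R : Type) [CommRing R] (n : ℕ) (M : Type) [AddCommGroup M]
    [Module (Az R n) M] (i : ℕ) : Submodule (Az R n) M :=
  LinearMap.ker ((zc R n ^ i) • (LinearMap.id : M →ₗ[Az R n] M))

open Function

theorem IsDiscreteValuationRing.isTorsionFree_of_pow_smul_eq_zero {R M : Type*} [CommRing R]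
    [IsDomain R] [IsDiscreteValuationRing R] [AddCommGroup M] [Module R M] {x : R}
    (hx : Irreducible x) (h : ∀ (m : M) (p : ℕ), x ^ p • m = 0 → m = 0) :
    Module.IsTorsionFree R M := by
  refine .of_smul_eq_zero fun r m hrm => or_iff_not_imp_left.2 fun hr => ?_
  obtain ⟨p, u, rfl⟩ := eq_unit_mul_pow_irreducible hr hx
  rw [mul_smul] at hrm
  exact h m p (u.isUnit.smul_eq_zero.1 hrm)

section LiftSmul

variable {R A M F : Type*} [CommRing R] [CommRing A] [Algebra R A]
  [AddCommGroup M] [Module A M] [Module R M] [IsScalarTower R A M]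
  [AddCommGroup F] [Module A F] [Module R F] [IsScalarTower R A F]

theorem exists_comp_eq_smul_id_of_projective {a : A}
    (ha : ∀ b : A, ∃ r : R, a * b = algebraMap R A r * a)
    [Module.Projective R ((LinearMap.range (a • LinearMap.id : M →ₗ[A] M)).restrictScalars R)]
    (π : F →ₗ[A] M) (hπ : Surjective π) :
    ∃ σ : M →ₗ[A] F, π ∘ₗ σ = a • LinearMap.id := by
  set W := (LinearMap.range (a • LinearMap.id : M →ₗ[A] M)).restrictScalars R
  set V := (LinearMap.range (a • LinearMap.id : F →ₗ[A] F)).restrictScalars R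
  have hπV : ∀ v ∈ V, π v ∈ W := by
    rintro _ ⟨v, rfl⟩
    exact ⟨π v, by simp⟩
  have hsurj : Surjective ((π.restrictScalars R).restrict hπV) := by
    rintro ⟨_, u, rfl⟩
    obtain ⟨v, rfl⟩ := hπ u
    exact ⟨⟨a • v, v, rfl⟩, Subtype.ext (π.map_smul a v)⟩
  obtain ⟨φ, hφ⟩ := Module.projective_lifting_property _ LinearMap.id hsurj
  let ι : M →ₗ[R] W :=
    LinearMap.codRestrict W ((a • LinearMap.id : M →ₗ[A] M).restrictScalars R) fun u => ⟨u, rfl⟩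
  let σ : M →ₗ[R] F := V.subtype ∘ₗ φ ∘ₗ ι
  have hσ : ∀ u, π (σ u) = a • u := fun u => congr_arg Subtype.val (LinearMap.congr_fun hφ _)
  have hact : ∀ b : A, ∃ r : R, (∀ u : M, a • b • u = r • a • u) ∧ ∀ v ∈ V, b • v = r • v := by
    intro b
    obtain ⟨r, hr⟩ := ha b
    refine ⟨r, fun u => ?_, ?_⟩
    · rw [smul_smul, hr, ← smul_smul, algebraMap_smul]
    · rintro _ ⟨v, rfl⟩
      simp only [LinearMap.smul_apply, LinearMap.id_apply]
      rw [smul_smul, mul_comm, hr, ← smul_smul, algebraMap_smul]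
  refine ⟨{ toFun := σ, map_add' := σ.map_add, map_smul' := fun b u => ?_ }, LinearMap.ext hσ⟩
  obtain ⟨r, hW, hV⟩ := hact b
  have hι : ι (b • u) = r • ι u := Subtype.ext (hW u)
  change σ (b • u) = b • σ u
  rw [hV (σ u) (φ (ι u)).2, ← σ.map_smul]
  simp only [σ, LinearMap.comp_apply, hι, map_smul]

end LiftSmul

theorem exists_comp_eq_smul_of_comp_eq_zero {A P₀ P₁ P₂ M N : Type*} [CommRing A]
    [AddCommGroup P₀] [Module A P₀] [AddCommGroup P₁] [Module A P₁] [AddCommGroup P₂]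
    [Module A P₂] [AddCommGroup M] [Module A M] [AddCommGroup N] [Module A N]
    {d₂ : P₂ →ₗ[A] P₁} {d₁ : P₁ →ₗ[A] P₀} {π : P₀ →ₗ[A] M}
    (h₁ : Exact d₂ d₁) (h₀ : Exact d₁ π) {a : A} {σ : M →ₗ[A] P₀}
    (hσ : π ∘ₗ σ = a • LinearMap.id) {φ : P₁ →ₗ[A] N} (hφ : φ ∘ₗ d₂ = 0) :
    ∃ ψ : P₀ →ₗ[A] N, ψ ∘ₗ d₁ = a • φ := by
  have hker : LinearMap.ker d₁ ≤ LinearMap.ker φ := by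
    rw [h₁.linearMap_ker_eq, LinearMap.range_le_ker_iff, hφ]
  let φbar : LinearMap.range d₁ →ₗ[A] N :=
    (LinearMap.ker d₁).liftQ φ hker ∘ₗ d₁.quotKerEquivRange.symm.toLinearMap
  have hφbar : ∀ p, φbar (d₁.rangeRestrict p) = φ p := fun p => by
    simp only [φbar, LinearMap.comp_apply, LinearEquiv.coe_coe]
    rw [(LinearEquiv.symm_apply_eq _).2 (Subtype.ext (d₁.quotKerEquivRange_apply_mk p).symm)]
    rfl
  -- `a • id - σ ∘ π` takes values in `ker π = range d₁` and is `a • id` there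
  have hθ : ∀ p, a • p - σ (π p) ∈ LinearMap.range d₁ := fun p => by
    rw [← h₀.linearMap_ker_eq, LinearMap.mem_ker, map_sub, ← LinearMap.comp_apply, hσ]
    simp
  let θ : P₀ →ₗ[A] LinearMap.range d₁ :=
    LinearMap.codRestrict _ (a • LinearMap.id - σ ∘ₗ π) hθ
  refine ⟨φbar ∘ₗ θ, LinearMap.ext fun p => ?_⟩
  have : θ (d₁ p) = a • d₁.rangeRestrict p := by
    ext
    simp [θ, h₀.apply_apply_eq_zero]
  simp [this, hφbar]

section Az

variable (R : Type) [CommRing R] (n : ℕ)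

instance : Module.Finite R (Az R n) :=
  .of_basis (AdjoinRoot.powerBasis' (monic_X_pow n)).basis

theorem zc_pow_pred_mul_zc : zc R n ^ (n - 1) * zc R n = 0 := by
  rw [zc, ← map_pow, ← map_mul, ← pow_succ, Ideal.Quotient.eq_zero_iff_mem,
    Ideal.mem_span_singleton]
  exact pow_dvd_pow X (by omega)

theorem exists_zc_pow_pred_mul_eq (b : Az R n) :
    ∃ r : R, zc R n ^ (n - 1) * b = algebraMap R (Az R n) r * zc R n ^ (n - 1) := by
  obtain ⟨p, rfl⟩ := Ideal.Quotient.mk_surjective b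
  refine ⟨p.coeff 0, ?_⟩
  have hp : Ideal.Quotient.mk _ p = algebraMap R (Az R n) (p.coeff 0) + zc R n *
      Ideal.Quotient.mk _ p.divX := by
    conv_lhs => rw [← X_mul_divX_add p]
    rw [map_add, add_comm, zc, ← map_mul]
    rfl
  rw [hp, mul_add, ← mul_assoc, zc_pow_pred_mul_zc, zero_mul, add_zero, mul_comm]

theorem exists_comp_eq_zc_pow_pred_smul_id {R : Type} [CommRing R] [IsDomain R]
    [IsDiscreteValuationRing R] {n : ℕ} {x : R} (hx : Irreducible x)
    {M F : Type} [AddCommGroup M] [Module (Az R n) M] [Module.Finite (Az R n) M]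
    [AddCommGroup F] [Module (Az R n) F]
    (htf : ∀ (u : M) (p : ℕ), (algebraMap R (Az R n) x) ^ p • u = 0 → u = 0)
    (π : F →ₗ[Az R n] M) (hπ : Surjective π) :
    ∃ σ : M →ₗ[Az R n] F, π ∘ₗ σ = zc R n ^ (n - 1) • LinearMap.id := by
  let _ : Module R M := .compHom M (algebraMap R (Az R n))
  let _ : Module R F := .compHom F (algebraMap R (Az R n))
  have : IsScalarTower R (Az R n) M := ⟨fun r b m => by rw [Algebra.smul_def r b, mul_smul]; rfl⟩
  have : IsScalarTower R (Az R n) F := ⟨fun r b m => by rw [Algebra.smul_def r b, mul_smul]; rfl⟩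
  have : Module.Finite R M := .trans (Az R n) M
  have : Module.IsTorsionFree R M :=
    IsDiscreteValuationRing.isTorsionFree_of_pow_smul_eq_zero hx fun u p hu =>
      htf u p (by rwa [← map_pow])
  exact exists_comp_eq_smul_id_of_projective (exists_zc_pow_pred_mul_eq R n) π hπ

end Az

open CategoryTheory

theorem CochainComplex.smul_homology_one_eq_zero {A : Type*} [CommRing A]
    (K : CochainComplex (ModuleCat A) ℕ) (a : A)
    (h : ∀ c : K.X 1, K.d 1 2 c = 0 → ∃ b : K.X 0, K.d 0 1 b = a • c) (y : K.homology 1) :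
    a • y = 0 := by
  let S := K.sc' 0 1 2
  let e : K.homology 1 ≅ S.moduleCatLeftHomologyData.H :=
    K.homologyIsoSc' 0 1 2 (CochainComplex.prev_nat_succ 0) (CochainComplex.next ℕ 1) ≪≫
      S.moduleCatHomologyIso
  suffices ∀ y : S.moduleCatLeftHomologyData.H, a • y = 0 by
    apply e.toLinearEquiv.injective
    rw [map_smul, map_zero, this]
  intro y
  obtain ⟨c, rfl⟩ := Submodule.Quotient.mk_surjective _ y
  obtain ⟨b, hb⟩ := h c.1 c.2
  change a • (Submodule.Quotient.mk c : LinearMap.ker S.g.hom ⧸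
    LinearMap.range S.moduleCatToCycles) = 0
  rw [← Submodule.Quotient.mk_smul, Submodule.Quotient.mk_eq_zero]
  exact ⟨b, Subtype.ext hb⟩

universe u

theorem smul_ext_one_eq_zero_of_forall_epi_lift {A : Type u} [CommRing A]
    {M N : ModuleCat.{u} A} {a : A}
    (hlift : ∀ {F : ModuleCat.{u} A} (π : F ⟶ M), Epi π → ∃ σ : M ⟶ F, σ ≫ π = a • 𝟙 M)
    (e : ((Ext A (ModuleCat.{u} A) 1).obj (Opposite.op M)).obj N) :
    a • e = 0 := by
  obtain ⟨P⟩ := (inferInstance : HasProjectiveResolution M).out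
  obtain ⟨σ, hσ⟩ := hlift (P.π.f 0) (inferInstance : Epi (P.π.f 0))
  have h₁ := (ShortComplex.ShortExact.moduleCat_exact_iff_function_exact _).1 (P.exact_succ 0)
  have h₀ := (ShortComplex.ShortExact.moduleCat_exact_iff_function_exact _).1 P.exact₀
  apply (P.isoExt 1 N).toLinearEquiv.injective
  rw [map_smul, map_zero]
  refine CochainComplex.smul_homology_one_eq_zero _ a (fun c hc => ?_) _
  obtain ⟨ψ, hψ⟩ := exists_comp_eq_smul_of_comp_eq_zero h₁ h₀ (congr_arg ModuleCat.Hom.hom hσ)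
    (φ := c.hom) (congr_arg ModuleCat.Hom.hom hc)
  exact ⟨ModuleCat.ofHom ψ, ModuleCat.hom_ext hψ⟩

theorem stmt18_general (R : Type) [CommRing R] [IsDomain R] [IsDiscreteValuationRing R] (n : ℕ)
    (x : R) (hx : Irreducible x)
    (M N : Type) [AddCommGroup M] [Module (Az R n) M] [Module.Finite (Az R n) M]
    [AddCommGroup N] [Module (Az R n) N]
    (htf : ∀ (u : M) (p : ℕ), (algebraMap R (Az R n) x) ^ p • u = 0 → u = 0) :
    ∀ e : ((Ext (Az R n) (ModuleCat.{0} (Az R n)) 1).obj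
            (Opposite.op (ModuleCat.of (Az R n) M))).obj (ModuleCat.of (Az R n) N),
      (zc R n ^ (n - 1)) • e = 0 := by
  refine fun e => smul_ext_one_eq_zero_of_forall_epi_lift (fun π hπ => ?_) e
  obtain ⟨σ, hσ⟩ := exists_comp_eq_zc_pow_pred_smul_id hx htf π.hom
    ((ModuleCat.epi_iff_surjective π).1 hπ)
  exact ⟨ModuleCat.ofHom σ, ModuleCat.hom_ext hσ⟩

/-- Let `R` be a DVR with uniformizer `x`, `A = R[z]/(z^n)`, and `M`, `N`
finitely generated `A`-modules with `M` having no nonzero element annihilated by a power of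
`x`. Then `z^{n-1}` annihilates `Ext^1_A(M, N)`. -/
theorem stmt18 (R : Type) [CommRing R] [IsDomain R] [IsDiscreteValuationRing R] (n : ℕ)
    (x : R) (hx : Irreducible x)
    (M N : Type) [AddCommGroup M] [Module (Az R n) M] [Module.Finite (Az R n) M]
    [AddCommGroup N] [Module (Az R n) N] [Module.Finite (Az R n) N]
    (htf : ∀ (u : M) (p : ℕ), (algebraMap R (Az R n) x) ^ p • u = 0 → u = 0) :
    ∀ e : ((Ext (Az R n) (ModuleCat.{0} (Az R n)) 1).obj
            (Opposite.op (ModuleCat.of (Az R n) M))).obj (ModuleCat.of (Az R n) N),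
      (zc R n ^ (n - 1)) • e = 0 :=
  stmt18_general R n x hx M N htf
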